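/- arXiv:2505.08899 — 7 statements merged into one kernel-verified Lean document; each statement's English description precedes it below -/
import Mathlib

section
/- Let P, Q be probability measures with densities p, q relative to λ, and let E be a measurable set with α = Q(E) and β = P(Eᶜ). Then √(α(1−β)) + √(β(1−α)) ≥ ρ(P,Q), where ρ(P,Q) = ∫√(p·q) dλ is the Hellinger affinity. -/
open MeasureTheory Set

lemma sqrt_mul_le_half_add {x y : ℝ} (hx : 0 ≤ x) (hy : 0 ≤ y) :
    Real.sqrt (x * y) ≤ (x + y) / 2 := by
  rw [Real.sqrt_mul hx]
  nlinarith [sq_nonneg (Real.sqrt x - Real.sqrt y), Real.sq_sqrt hx, Real.sq_sqrt hy,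
    Real.sqrt_nonneg x, Real.sqrt_nonneg y]

lemma integrable_sqrt_mul {Ω : Type*} [MeasurableSpace Ω] {ν : Measure Ω}
    {f g : Ω → ℝ} (hfm : Measurable f) (hgm : Measurable g)
    (hf0 : ∀ x, 0 ≤ f x) (hg0 : ∀ x, 0 ≤ g x)
    (hfi : Integrable f ν) (hgi : Integrable g ν) :
    Integrable (fun x => Real.sqrt (f x * g x)) ν := by
  refine Integrable.mono' ((hfi.add hgi).div_const 2)
    ((hfm.mul hgm).sqrt.aestronglyMeasurable) ?_
  filter_upwards with x
  rw [Real.norm_of_nonneg (Real.sqrt_nonneg _)]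
  exact sqrt_mul_le_half_add (hf0 x) (hg0 x)

lemma integral_sqrt_mul_le {Ω : Type*} [MeasurableSpace Ω] (ν : Measure Ω)
    (f g : Ω → ℝ) (hfm : Measurable f) (hgm : Measurable g)
    (hf0 : ∀ x, 0 ≤ f x) (hg0 : ∀ x, 0 ≤ g x)
    (hfi : Integrable f ν) (hgi : Integrable g ν) :
    ∫ x, Real.sqrt (f x * g x) ∂ν ≤
      Real.sqrt (∫ x, f x ∂ν) * Real.sqrt (∫ x, g x ∂ν) := by
  set A := ∫ x, f x ∂ν with hA
  set B := ∫ x, g x ∂ν with hB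
  have hA0 : 0 ≤ A := integral_nonneg hf0
  have hB0 : 0 ≤ B := integral_nonneg hg0
  rcases eq_or_lt_of_le hA0 with hA0' | hApos
  · have hf_ae : f =ᵐ[ν] 0 := by
      rw [← integral_eq_zero_iff_of_nonneg hf0 hfi]; exact hA0'.symm
    have : (fun x => Real.sqrt (f x * g x)) =ᵐ[ν] 0 := by
      filter_upwards [hf_ae] with x hx
      simp [hx]
    rw [integral_congr_ae this]
    simp [mul_nonneg (Real.sqrt_nonneg _) (Real.sqrt_nonneg _)]
  rcases eq_or_lt_of_le hB0 with hB0' | hBpos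
  · have hg_ae : g =ᵐ[ν] 0 := by
      rw [← integral_eq_zero_iff_of_nonneg hg0 hgi]; exact hB0'.symm
    have : (fun x => Real.sqrt (f x * g x)) =ᵐ[ν] 0 := by
      filter_upwards [hg_ae] with x hx
      simp [hx]
    rw [integral_congr_ae this]
    simp [mul_nonneg (Real.sqrt_nonneg _) (Real.sqrt_nonneg _)]
  · set t := Real.sqrt (B / A) with ht
    have htpos : 0 < t := Real.sqrt_pos.mpr (div_pos hBpos hApos)
    have hpt : ∀ x, Real.sqrt (f x * g x) ≤ (t * f x + g x / t) / 2 := by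
      intro x
      have h1 : f x * g x = (t * f x) * (g x / t) := by
        field_simp
      rw [h1]
      exact sqrt_mul_le_half_add (mul_nonneg htpos.le (hf0 x))
        (div_nonneg (hg0 x) htpos.le)
    have hint : Integrable (fun x => (t * f x + g x / t) / 2) ν :=
      (((hfi.const_mul t).add (hgi.div_const t)).div_const 2)
    have hle : ∫ x, Real.sqrt (f x * g x) ∂ν ≤ ∫ x, (t * f x + g x / t) / 2 ∂ν :=
      integral_mono (integrable_sqrt_mul hfm hgm hf0 hg0 hfi hgi) hint hpt
    have hcalc : ∫ x, (t * f x + g x / t) / 2 ∂ν = (t * A + B / t) / 2 := by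
      rw [integral_div, integral_add (hfi.const_mul t) (hgi.div_const t),
        integral_const_mul, integral_div]
    have ht2 : t ^ 2 = B / A := Real.sq_sqrt (div_pos hBpos hApos).le
    have hkey : (t * A + B / t) / 2 = Real.sqrt A * Real.sqrt B := by
      have hsA : Real.sqrt A ^ 2 = A := Real.sq_sqrt hA0
      have hsB : Real.sqrt B ^ 2 = B := Real.sq_sqrt hB0
      have htv : t = Real.sqrt B / Real.sqrt A := by
        rw [ht, Real.sqrt_div hB0 A]
      rw [htv]
      have hsApos : 0 < Real.sqrt A := Real.sqrt_pos.mpr hApos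
      have hsBpos : 0 < Real.sqrt B := Real.sqrt_pos.mpr hBpos
      field_simp
      nlinarith [hsA, hsB]
    linarith [hle, hcalc ▸ hle, hkey]
  
/-- Hellinger-affinity lower bound: `√(α(1−β)) + √(β(1−α)) ≥ ρ(P,Q)`. -/
theorem stmt_4 {Ω : Type*} [MeasurableSpace Ω] (μ : Measure Ω)
    (p q : Ω → ℝ) (hpm : Measurable p) (hqm : Measurable q)
    (hp0 : ∀ x, 0 ≤ p x) (hq0 : ∀ x, 0 ≤ q x)
    (hpi : Integrable p μ) (hqi : Integrable q μ)
    (hp1 : ∫ x, p x ∂μ = 1) (hq1 : ∫ x, q x ∂μ = 1)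
    (α β : ℝ) (E : Set Ω) (hE : MeasurableSet E)
    (hαE : ∫ x in E, q x ∂μ = α) (hβE : ∫ x in Eᶜ, p x ∂μ = β) :
    Real.sqrt (α * (1 - β)) + Real.sqrt (β * (1 - α)) ≥
      ∫ x, Real.sqrt (p x * q x) ∂μ := by
  have hint : Integrable (fun x => Real.sqrt (p x * q x)) μ :=
    integrable_sqrt_mul hpm hqm hp0 hq0 hpi hqi
  have hsplit : ∫ x, Real.sqrt (p x * q x) ∂μ =
      (∫ x in E, Real.sqrt (p x * q x) ∂μ) + ∫ x in Eᶜ, Real.sqrt (p x * q x) ∂μ :=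
    (integral_add_compl hE hint).symm
  have hpE : ∫ x in E, p x ∂μ = 1 - β := by
    have := integral_add_compl hE hpi
    rw [hβE, hp1] at this
    linarith
  have hqEc : ∫ x in Eᶜ, q x ∂μ = 1 - α := by
    have := integral_add_compl hE hqi
    rw [hαE, hq1] at this
    linarith
  have hα0 : 0 ≤ α := hαE ▸ setIntegral_nonneg hE fun x _ => hq0 x
  have hβ0 : 0 ≤ β := hβE ▸ setIntegral_nonneg hE.compl fun x _ => hp0 x
  have h1 : ∫ x in E, Real.sqrt (p x * q x) ∂μ ≤ Real.sqrt (α * (1 - β)) := by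
    calc ∫ x in E, Real.sqrt (p x * q x) ∂μ
        ≤ Real.sqrt (∫ x in E, p x ∂μ) * Real.sqrt (∫ x in E, q x ∂μ) :=
          integral_sqrt_mul_le _ p q hpm hqm hp0 hq0 hpi.restrict hqi.restrict
      _ = Real.sqrt (α * (1 - β)) := by
          rw [hpE, hαE, Real.sqrt_mul hα0, mul_comm]
  have h2 : ∫ x in Eᶜ, Real.sqrt (p x * q x) ∂μ ≤ Real.sqrt (β * (1 - α)) := by
    calc ∫ x in Eᶜ, Real.sqrt (p x * q x) ∂μ
        ≤ Real.sqrt (∫ x in Eᶜ, p x ∂μ) * Real.sqrt (∫ x in Eᶜ, q x ∂μ) :=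
          integral_sqrt_mul_le _ p q hpm hqm hp0 hq0 hpi.restrict hqi.restrict
      _ = Real.sqrt (β * (1 - α)) := by
          rw [hβE, hqEc, Real.sqrt_mul hβ0]
  rw [ge_iff_le, hsplit]
  exact add_le_add h1 h2
end

section
/- Let P, Q have densities p, q relative to λ, and let E be a measurable set with α = Q(E) ∈ (0,1) and β = P(Eᶜ). Then β·ln(β/(1−α)) + (1−β)·ln((1−β)/α) ≤ KL(P‖Q), where KL(P‖Q) = ∫ p·ln(p/q) dλ (with the conventions 0·ln 0 = 0 and KL = +∞ if P is not absolutely continuous w.r.t. Q). -/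
open MeasureTheory Set

/-- Pointwise Gibbs inequality: for `c > 0`, a.e. where `q = 0 → p = 0`,
`p * log c + (p - c * q) ≤ p * log (p / q)`. -/
lemma gibbs_pointwise {p q c : ℝ} (hp : 0 ≤ p) (hq : 0 ≤ q) (hc : 0 < c)
    (hac : q = 0 → p = 0) :
    p * Real.log c + (p - c * q) ≤ p * Real.log (p / q) := by
  rcases eq_or_lt_of_le hq with hq0 | hq0
  · have hp0 : p = 0 := hac hq0.symm
    simp [hp0, ← hq0]
  rcases eq_or_lt_of_le hp with hp0 | hp0
  · simp [← hp0]
    positivity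
  -- p > 0, q > 0
  have h1 : Real.log (c * q / p) ≤ c * q / p - 1 :=
    Real.log_le_sub_one_of_pos (by positivity)
  have h2 : Real.log (p / q) - Real.log c = Real.log (p / (c * q)) := by
    rw [Real.log_div hp0.ne' hq0.ne',
      Real.log_div hp0.ne' (by positivity : c * q ≠ 0),
      Real.log_mul hc.ne' hq0.ne']
    ring
  have h3 : Real.log (p / (c * q)) = - Real.log (c * q / p) := by
    rw [← Real.log_inv]; congr 1; field_simp
  have h4 : 1 - c * q / p ≤ Real.log (p / q) - Real.log c := by
    rw [h2, h3]; linarith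
  have := mul_le_mul_of_nonneg_left h4 hp
  calc p * Real.log c + (p - c * q)
      = p * Real.log c + p * (1 - c * q / p) := by field_simp
    _ ≤ p * Real.log c + p * (Real.log (p / q) - Real.log c) := by linarith
    _ = p * Real.log (p / q) := by ring

/-- Gibbs inequality on a set. -/
lemma gibbs_set {Ω : Type*} [MeasurableSpace Ω] (μ : Measure Ω)
    (p q : Ω → ℝ)
    (hp0 : ∀ x, 0 ≤ p x) (hq0 : ∀ x, 0 ≤ q x)
    (hpi : Integrable p μ) (hqi : Integrable q μ)
    (hac : ∀ᵐ x ∂μ, q x = 0 → p x = 0)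
    (hInt : Integrable (fun x => p x * Real.log (p x / q x)) μ)
    (A : Set Ω) (hA : MeasurableSet A)
    (hQA : 0 < ∫ x in A, q x ∂μ) :
    (∫ x in A, p x ∂μ) * Real.log ((∫ x in A, p x ∂μ) / (∫ x in A, q x ∂μ)) ≤
      ∫ x in A, p x * Real.log (p x / q x) ∂μ := by
  set PA := ∫ x in A, p x ∂μ with hPA
  set QA := ∫ x in A, q x ∂μ with hQAdef
  have hPA0 : 0 ≤ PA := setIntegral_nonneg hA fun x _ => hp0 x
  rcases eq_or_lt_of_le hPA0 with hPA0' | hPA0'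
  · -- PA = 0 : p = 0 a.e. on A, integral is 0
    have hp_ae : ∀ᵐ x ∂μ.restrict A, p x = 0 := by
      have := (integral_eq_zero_iff_of_nonneg_ae
        (ae_of_all _ fun x => hp0 x) hpi.integrableOn).mp hPA0'.symm
      filter_upwards [this] with x hx using hx
    have : ∫ x in A, p x * Real.log (p x / q x) ∂μ = 0 := by
      rw [integral_eq_zero_iff_of_nonneg_ae ?_ hInt.integrableOn]
      · filter_upwards [hp_ae] with x hx; simp [hx]
      · filter_upwards [hp_ae] with x hx; simp [hx]
    rw [this, ← hPA0']
    simp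
  · -- PA > 0 : use c = PA / QA
    set c := PA / QA with hc
    have hcpos : 0 < c := div_pos hPA0' hQA
    have hpt : ∀ᵐ x ∂μ.restrict A,
        p x * Real.log c + (p x - c * q x) ≤ p x * Real.log (p x / q x) := by
      refine ae_restrict_of_ae ?_
      filter_upwards [hac] with x hx
      exact gibbs_pointwise (hp0 x) (hq0 x) hcpos hx
    have hint1 : Integrable (fun x => p x * Real.log c + (p x - c * q x))
        (μ.restrict A) :=
      ((hpi.integrableOn.mul_const _).add
        (hpi.integrableOn.sub (hqi.integrableOn.const_mul c)))
    have hle := integral_mono_ae hint1 hInt.integrableOn hpt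
    have hcomp : ∫ x in A, (p x * Real.log c + (p x - c * q x)) ∂μ
        = PA * Real.log c := by
      have hA1 : Integrable (fun x => p x * Real.log c) (μ.restrict A) :=
        hpi.integrableOn.mul_const _
      have hA2 : Integrable (fun x => p x - c * q x) (μ.restrict A) :=
        hpi.integrableOn.sub (hqi.integrableOn.const_mul c)
      rw [integral_add hA1 hA2,
        integral_sub hpi.integrableOn (hqi.integrableOn.const_mul c),
        integral_mul_const, integral_const_mul, ← hPA, ← hQAdef]
      have : c * QA = PA := by rw [hc, div_mul_cancel₀ _ hQA.ne']
      rw [this]; ring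
    rw [hcomp] at hle
    exact hle

/-- KL lower bound: `β ln(β/(1−α)) + (1−β) ln((1−β)/α) ≤ KL(P‖Q)`. -/
theorem stmt_8 {Ω : Type*} [MeasurableSpace Ω] (μ : Measure Ω)
    (p q : Ω → ℝ) (hpm : Measurable p) (hqm : Measurable q)
    (hp0 : ∀ x, 0 ≤ p x) (hq0 : ∀ x, 0 ≤ q x)
    (hpi : Integrable p μ) (hqi : Integrable q μ)
    (hp1 : ∫ x, p x ∂μ = 1) (hq1 : ∫ x, q x ∂μ = 1)
    -- P is absolutely continuous with respect to Q
    (hac : ∀ᵐ x ∂μ, q x = 0 → p x = 0)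
    (hInt : Integrable (fun x => p x * Real.log (p x / q x)) μ)
    (α β : ℝ) (hα : α ∈ Set.Ioo (0:ℝ) 1)
    (E : Set Ω) (hE : MeasurableSet E)
    (hαE : ∫ x in E, q x ∂μ = α) (hβE : ∫ x in Eᶜ, p x ∂μ = β) :
    β * Real.log (β / (1 - α)) + (1 - β) * Real.log ((1 - β) / α) ≤
      ∫ x, p x * Real.log (p x / q x) ∂μ := by
  have hsplitp : (∫ x in E, p x ∂μ) + ∫ x in Eᶜ, p x ∂μ = 1 := by
    rw [integral_add_compl hE hpi, hp1]
  have hsplitq : (∫ x in E, q x ∂μ) + ∫ x in Eᶜ, q x ∂μ = 1 := by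
    rw [integral_add_compl hE hqi, hq1]
  have hEp : ∫ x in E, p x ∂μ = 1 - β := by rw [hβE] at hsplitp; linarith
  have hEcq : ∫ x in Eᶜ, q x ∂μ = 1 - α := by rw [hαE] at hsplitq; linarith
  have h1 := gibbs_set μ p q hp0 hq0 hpi hqi hac hInt E hE
    (by rw [hαE]; exact hα.1)
  have h2 := gibbs_set μ p q hp0 hq0 hpi hqi hac hInt Eᶜ hE.compl
    (by rw [hEcq]; linarith [hα.2])
  rw [hEp, hαE] at h1
  rw [hβE, hEcq] at h2
  rw [← integral_add_compl hE hInt]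
  linarith
end

section
/- Let P, Q have densities p, q relative to λ, and let E be measurable with α = Q(E) ∈ (0,1), β = P(Eᶜ). Then (1 − β − α)² / (α(1−α)) ≤ χ²(P‖Q), where χ²(P‖Q) = ∫_{q>0} (p−q)²/q dλ (+∞ if P(q=0) > 0). -/
/-!
Split the χ² integral along `E` and `Eᶜ`. On a set `A` where `q > 0`, the pointwise bound
`2c(p - q) - c²q ≤ (p - q)²/q` (a completed square) integrates, for `c = (P(A) - Q(A))/Q(A)`,
to `(P(A) - Q(A))²/Q(A) ≤ ∫_A (p - q)²/q`. With `P(E) - Q(E) = 1 - β - α = Q(Eᶜ) - P(Eᶜ)` the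
two bounds add up to `(1 - β - α)²(1/α + 1/(1 - α))`.
-/

open MeasureTheory Set

lemma two_mul_mul_sub_sub_le_sq_div {p q : ℝ} (hq : 0 < q) (c : ℝ) :
    2 * c * (p - q) - c ^ 2 * q ≤ (p - q) ^ 2 / q := by
  rw [le_div_iff₀ hq]
  nlinarith [sq_nonneg (p - q - c * q)]

lemma two_mul_div_mul_sub_div_sq_mul (a b : ℝ) :
    2 * (b / a) * b - (b / a) ^ 2 * a = b ^ 2 / a := by
  rcases eq_or_ne a 0 with rfl | ha
  · simp
  · field_simp
    ring

section

variable {Ω : Type*} [MeasurableSpace Ω] {μ : Measure Ω} {p q : Ω → ℝ}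

lemma sq_sub_div_le_setIntegral_sq_sub_div {A : Set Ω} (hA : MeasurableSet A)
    (hq : ∀ x ∈ A, 0 < q x) (hpi : IntegrableOn p A μ) (hqi : IntegrableOn q A μ)
    (hχ : IntegrableOn (fun x => (p x - q x) ^ 2 / q x) A μ) :
    ((∫ x in A, p x ∂μ) - ∫ x in A, q x ∂μ) ^ 2 / ∫ x in A, q x ∂μ ≤
      ∫ x in A, (p x - q x) ^ 2 / q x ∂μ := by
  set c := ((∫ x in A, p x ∂μ) - ∫ x in A, q x ∂μ) / ∫ x in A, q x ∂μ
  have hdiff : Integrable (fun x => p x - q x) (μ.restrict A) := hpi.sub hqi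
  calc _ = ∫ x in A, (2 * c * (p x - q x) - c ^ 2 * q x) ∂μ := by
        rw [integral_sub (hdiff.const_mul _) (hqi.const_mul _), integral_const_mul,
          integral_const_mul, integral_sub hpi hqi, two_mul_div_mul_sub_div_sq_mul]
    _ ≤ _ := setIntegral_mono_on (by exact (hdiff.const_mul _).sub (hqi.const_mul _)) hχ hA
        fun x hx => two_mul_mul_sub_sub_le_sq_div (hq x hx) c

lemma setIntegral_inter_eq_setIntegral {G : Type*} [NormedAddCommGroup G] [NormedSpace ℝ G]
    {f : Ω → G} {S T : Set Ω} (hT : MeasurableSet T)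
    (hf : ∀ᵐ x ∂μ, x ∉ S → f x = 0) : ∫ x in S ∩ T, f x ∂μ = ∫ x in T, f x ∂μ := by
  refine (setIntegral_eq_of_subset_of_ae_sdiff_eq_zero hT.nullMeasurableSet
    inter_subset_right ?_).symm
  filter_upwards [hf] with x hx hxT
  exact hx fun hxS => hxT.2 ⟨hxS, hxT.1⟩

end

theorem stmt_10_general {Ω : Type*} [MeasurableSpace Ω] (μ : Measure Ω)
    (p q : Ω → ℝ) (hqm : Measurable q)
    (hq0 : ∀ x, 0 ≤ q x)
    (hpi : Integrable p μ) (hqi : Integrable q μ)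
    (hp1 : ∫ x, p x ∂μ = 1) (hq1 : ∫ x, q x ∂μ = 1)
    -- P assigns no mass to {q = 0} (otherwise χ² = +∞ and the bound is trivial)
    (hac : ∀ᵐ x ∂μ, q x = 0 → p x = 0)
    (hInt : IntegrableOn (fun x => (p x - q x) ^ 2 / q x) {x | 0 < q x} μ)
    (α β : ℝ) (hα : α ∈ Set.Ioo (0:ℝ) 1)
    (E : Set Ω) (hE : MeasurableSet E)
    (hαE : ∫ x in E, q x ∂μ = α) (hβE : ∫ x in Eᶜ, p x ∂μ = β) :
    (1 - β - α) ^ 2 / (α * (1 - α)) ≤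
      ∫ x in {x | 0 < q x}, (p x - q x) ^ 2 / q x ∂μ := by
  set S : Set Ω := {x | 0 < q x}
  have hS : MeasurableSet S := measurableSet_lt measurable_const hqm
  have hq_off : ∀ᵐ x ∂μ, x ∉ S → q x = 0 :=
    .of_forall fun x hx => le_antisymm (not_lt.1 hx) (hq0 x)
  have hp_off : ∀ᵐ x ∂μ, x ∉ S → p x = 0 := by
    filter_upwards [hac, hq_off] with x hpq hq hx using hpq (hq hx)
  have bound (T : Set Ω) (hT : MeasurableSet T) :
      ((∫ x in T, p x ∂μ) - ∫ x in T, q x ∂μ) ^ 2 / ∫ x in T, q x ∂μ ≤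
        ∫ x in S ∩ T, (p x - q x) ^ 2 / q x ∂μ := by
    rw [← setIntegral_inter_eq_setIntegral hT hp_off, ← setIntegral_inter_eq_setIntegral hT hq_off]
    exact sq_sub_div_le_setIntegral_sq_sub_div (hS.inter hT) (fun x hx => hx.1)
      hpi.integrableOn hqi.integrableOn (hInt.mono_set inter_subset_left)
  have hpE : ∫ x in E, p x ∂μ = 1 - β := by linarith [integral_add_compl hE hpi]
  have hqEc : ∫ x in Eᶜ, q x ∂μ = 1 - α := by linarith [integral_add_compl hE hqi]
  have hχE := bound E hE
  have hχEc := bound Eᶜ hE.compl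
  rw [hpE, hαE] at hχE
  rw [hβE, hqEc] at hχEc
  rw [← integral_inter_add_sdiff hE hInt, sdiff_eq]
  obtain ⟨hα0, hα1⟩ := hα
  have hsum : (1 - β - α) ^ 2 / (α * (1 - α)) =
      (1 - β - α) ^ 2 / α + (β - (1 - α)) ^ 2 / (1 - α) := by
    field_simp [(sub_pos.2 hα1).ne']
    ring
  linarith

/-- χ²-divergence lower bound: `(1 − β − α)² / (α(1−α)) ≤ χ²(P‖Q)`. -/
theorem stmt_10 {Ω : Type*} [MeasurableSpace Ω] (μ : Measure Ω)
    (p q : Ω → ℝ) (hpm : Measurable p) (hqm : Measurable q)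
    (hp0 : ∀ x, 0 ≤ p x) (hq0 : ∀ x, 0 ≤ q x)
    (hpi : Integrable p μ) (hqi : Integrable q μ)
    (hp1 : ∫ x, p x ∂μ = 1) (hq1 : ∫ x, q x ∂μ = 1)
    -- P assigns no mass to {q = 0} (otherwise χ² = +∞ and the bound is trivial)
    (hac : ∀ᵐ x ∂μ, q x = 0 → p x = 0)
    (hInt : IntegrableOn (fun x => (p x - q x) ^ 2 / q x) {x | 0 < q x} μ)
    (α β : ℝ) (hα : α ∈ Set.Ioo (0:ℝ) 1)
    (E : Set Ω) (hE : MeasurableSet E)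
    (hαE : ∫ x in E, q x ∂μ = α) (hβE : ∫ x in Eᶜ, p x ∂μ = β) :
    (1 - β - α) ^ 2 / (α * (1 - α)) ≤
      ∫ x in {x | 0 < q x}, (p x - q x) ^ 2 / q x ∂μ :=
  stmt_10_general μ p q hqm hq0 hpi hqi hp1 hq1 hac hInt α β hα E hE hαE hβE
end

section
/- For γ ≥ 0, equality in the hockey-stick lower bound β = −γα + 1 − D_{f_γ}(P‖Q) is attained by the likelihood ratio test E with E ∩ {q>0} = {x : p(x)/q(x) > γ} and {q = 0} ⊆ E, i.e., with α = Q(p > γq) and β = P(p ≤ γq, q > 0). -/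
/-!
With `A = {γq < p}`, the hockey-stick integrand is `(p - γq)` on `A` and `0` off it, so
`D = P(A) - γ Q(A)`. The complement of `A` carries `P`-mass `1 - P(A)`, and it differs from
`{p ≤ γq, q > 0}` only on `{q = 0, p ≤ 0}`, where `p` vanishes.
-/

open MeasureTheory Set

section

variable {Ω : Type*} [MeasurableSpace Ω] {μ : Measure Ω}

theorem integral_max_sub_zero_eq_setIntegral_sub {f g : Ω → ℝ}
    (hf : Integrable f μ) (hg : Integrable g μ) :
    ∫ x, max (f x - g x) 0 ∂μ =
      ∫ x in {x | g x < f x}, f x ∂μ - ∫ x in {x | g x < f x}, g x ∂μ := by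
  have hpos : (fun x => max (f x - g x) 0) = {x | g x < f x}.indicator (fun x => f x - g x) := by
    funext x
    by_cases hx : g x < f x
    · simp [hx, le_of_lt]
    · simp [hx, not_lt.mp hx]
  rw [hpos, integral_indicator₀ (nullMeasurableSet_lt hg.aemeasurable hf.aemeasurable),
    integral_sub hf.integrableOn hg.integrableOn]

theorem setIntegral_le_and_pos_eq_setIntegral_le {p q : Ω → ℝ}
    (hp : AEMeasurable p μ) (hq : AEMeasurable q μ)
    (hp0 : ∀ x, 0 ≤ p x) (hq0 : ∀ x, 0 ≤ q x) (c : ℝ) :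
    ∫ x in {x | p x ≤ c * q x ∧ 0 < q x}, p x ∂μ = ∫ x in {x | p x ≤ c * q x}, p x ∂μ := by
  refine (setIntegral_eq_of_subset_of_ae_sdiff_eq_zero
    (nullMeasurableSet_le hp (hq.const_mul c)) (fun x hx => hx.1) (ae_of_all _ ?_)).symm
  rintro x ⟨hle, hnot⟩
  have hqx : q x = 0 := le_antisymm (not_lt.mp fun h => hnot ⟨hle, h⟩) (hq0 x)
  exact le_antisymm (by simpa [hqx] using hle) (hp0 x)

end

theorem stmt_13_general {Ω : Type*} [MeasurableSpace Ω] (μ : Measure Ω)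
    (p q : Ω → ℝ)
    (hp0 : ∀ x, 0 ≤ p x) (hq0 : ∀ x, 0 ≤ q x)
    (hpi : Integrable p μ) (hqi : Integrable q μ)
    (hp1 : ∫ x, p x ∂μ = 1)
    (γ : ℝ) :
    (∫ x in {x | p x ≤ γ * q x ∧ 0 < q x}, p x ∂μ) =
      -γ * (∫ x in {x | γ * q x < p x}, q x ∂μ) + 1 -
        ∫ x, max (p x - γ * q x) 0 ∂μ := by
  have hA : NullMeasurableSet {x | γ * q x < p x} μ :=
    nullMeasurableSet_lt (hqi.aemeasurable.const_mul γ) hpi.aemeasurable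
  have hAc : {x | p x ≤ γ * q x} = {x | γ * q x < p x}ᶜ := by
    ext x
    simp
  have hsplit := integral_add_compl₀ hA hpi
  rw [setIntegral_le_and_pos_eq_setIntegral_le hpi.aemeasurable hqi.aemeasurable hp0 hq0,
    integral_max_sub_zero_eq_setIntegral_sub hpi (hqi.const_mul γ), integral_const_mul, hAc]
  linarith

/-- The likelihood ratio test with threshold `γ` attains equality in the hockey-stick bound:
with `α = Q(p > γq)` and `β = P(p ≤ γq, q > 0)`, `β = −γα + 1 − D_{f_γ}(P‖Q)`. -/
theorem stmt_13 {Ω : Type*} [MeasurableSpace Ω] (μ : Measure Ω)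
    (p q : Ω → ℝ) (hpm : Measurable p) (hqm : Measurable q)
    (hp0 : ∀ x, 0 ≤ p x) (hq0 : ∀ x, 0 ≤ q x)
    (hpi : Integrable p μ) (hqi : Integrable q μ)
    (hp1 : ∫ x, p x ∂μ = 1) (hq1 : ∫ x, q x ∂μ = 1)
    (γ : ℝ) (hγ : 0 ≤ γ) :
    (∫ x in {x | p x ≤ γ * q x ∧ 0 < q x}, p x ∂μ) =
      -γ * (∫ x in {x | γ * q x < p x}, q x ∂μ) + 1 -
        ∫ x, max (p x - γ * q x) 0 ∂μ :=
  stmt_13_general μ p q hp0 hq0 hpi hqi hp1 γ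
end

section
/- Fix ρ ∈ (0,1) and set γ = arcsin ρ ∈ (0, π/2). For θ ∈ (0, γ), let α(θ) = sin²θ and β(θ) = sin²(γ − θ), so that √(α(1−β)) + √(β(1−α)) = ρ. Then the tangent line to this curve at (α(θ), β(θ)) is α·sin(2γ−2θ) + β·sin(2θ) = 2ρ·sinθ·sin(γ−θ), and with s = sin(2γ−2θ)/(ρ·cos(γ−2θ)) ∈ (0,2), this line can be rewritten as sα + (2−s)β = 1 − √(1 − s(2−s)ρ²). -/
open Real Set

/-- Supporting lines to the Hellinger lower bound: with `γ = arcsin ρ`, `α = sin²θ`,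
`β = sin²(γ−θ)`, the point lies on the Hellinger curve, the line
`a·sin(2γ−2θ) + b·sin(2θ) = 2ρ sinθ sin(γ−θ)` passes through it tangentially, and with
`s = sin(2γ−2θ)/(ρ cos(γ−2θ)) ∈ (0,2)` it rewrites as `sα + (2−s)β = 1 − √(1 − s(2−s)ρ²)`. -/
theorem stmt_16 (ρ γ θ s : ℝ) (hρ : ρ ∈ Set.Ioo (0:ℝ) 1)
    (hγ : γ = Real.arcsin ρ) (hθ : θ ∈ Set.Ioo 0 γ)
    (hs : s = Real.sin (2 * γ - 2 * θ) / (ρ * Real.cos (γ - 2 * θ))) :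
    -- the point is on the Hellinger curve
    Real.sqrt (Real.sin θ ^ 2 * (1 - Real.sin (γ - θ) ^ 2)) +
        Real.sqrt (Real.sin (γ - θ) ^ 2 * (1 - Real.sin θ ^ 2)) = ρ ∧
      -- the line passes through the point
      Real.sin θ ^ 2 * Real.sin (2 * γ - 2 * θ) + Real.sin (γ - θ) ^ 2 * Real.sin (2 * θ) =
        2 * ρ * Real.sin θ * Real.sin (γ - θ) ∧
      -- tangency: the line functional is stationary along the curve at θ
      HasDerivAt (fun x : ℝ =>
          Real.sin x ^ 2 * Real.sin (2 * γ - 2 * θ) +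
            Real.sin (γ - x) ^ 2 * Real.sin (2 * θ)) 0 θ ∧
      -- the rewriting in terms of the parameter s
      s ∈ Set.Ioo (0:ℝ) 2 ∧
      2 - s = Real.sin (2 * θ) / (ρ * Real.cos (γ - 2 * θ)) ∧
      1 - Real.sqrt (1 - s * (2 - s) * ρ ^ 2) =
        2 * Real.sin θ * Real.sin (γ - θ) / Real.cos (γ - 2 * θ) := by
  obtain ⟨hρ0, hρ1⟩ := hρ
  obtain ⟨hθ0, hθγ⟩ := hθ
  have hγρ : Real.sin γ = ρ := by rw [hγ]; exact Real.sin_arcsin (by linarith) hρ1.le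
  have hγ0 : 0 < γ := by rw [hγ]; exact Real.arcsin_pos.2 hρ0
  have hγπ : γ < π / 2 := by
    rw [hγ]; exact Real.arcsin_lt_pi_div_two.2 hρ1
  have hπ : (0:ℝ) < π := Real.pi_pos
  have hsθ : 0 < Real.sin θ := Real.sin_pos_of_pos_of_lt_pi hθ0 (by linarith)
  have hsγθ : 0 < Real.sin (γ - θ) := Real.sin_pos_of_pos_of_lt_pi (by linarith) (by linarith)
  have hcθ : 0 < Real.cos θ := Real.cos_pos_of_mem_Ioo ⟨by linarith, by linarith⟩
  have hcγθ : 0 < Real.cos (γ - θ) := Real.cos_pos_of_mem_Ioo ⟨by linarith, by linarith⟩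
  have hc2 : 0 < Real.cos (γ - 2 * θ) := Real.cos_pos_of_mem_Ioo ⟨by linarith, by linarith⟩
  have hcγ : 0 < Real.cos γ := Real.cos_pos_of_mem_Ioo ⟨by linarith, by linarith⟩
  have e1 : Real.sin (2 * γ - 2 * θ) = 2 * Real.sin (γ - θ) * Real.cos (γ - θ) := by
    rw [show 2 * γ - 2 * θ = 2 * (γ - θ) by ring, Real.sin_two_mul]
  have e2 : Real.sin (2 * θ) = 2 * Real.sin θ * Real.cos θ := Real.sin_two_mul θ
  have e3 : Real.cos (γ - 2 * θ) = Real.cos (γ - θ) * Real.cos θ + Real.sin (γ - θ) * Real.sin θ := by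
    rw [show γ - 2 * θ = (γ - θ) - θ by ring, Real.cos_sub]
  have e4 : Real.sin γ = Real.sin (γ - θ) * Real.cos θ + Real.cos (γ - θ) * Real.sin θ := by
    have := Real.sin_add (γ - θ) θ
    rwa [show γ - θ + θ = γ by ring] at this
  have e5 : Real.cos γ = Real.cos (γ - θ) * Real.cos θ - Real.sin (γ - θ) * Real.sin θ := by
    have := Real.cos_add (γ - θ) θ
    rwa [show γ - θ + θ = γ by ring] at this
  have pyθ := Real.sin_sq_add_cos_sq θ
  have pyγθ := Real.sin_sq_add_cos_sq (γ - θ)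
  have keyE : Real.sin (2 * γ - 2 * θ) + Real.sin (2 * θ) = 2 * ρ * Real.cos (γ - 2 * θ) := by
    rw [e1, e2, e3, ← hγρ, e4]
    linear_combination (-2*Real.sin (γ-θ)*Real.cos (γ-θ))*pyθ + (-2*Real.sin θ*Real.cos θ)*pyγθ
  refine ⟨?_, ?_, ?_, ?_, ?_, ?_⟩
  · rw [show 1 - Real.sin (γ - θ) ^ 2 = Real.cos (γ - θ) ^ 2 by linarith [pyγθ],
      show 1 - Real.sin θ ^ 2 = Real.cos θ ^ 2 by linarith [pyθ],
      show Real.sin θ ^ 2 * Real.cos (γ - θ) ^ 2 = (Real.sin θ * Real.cos (γ - θ)) ^ 2 by ring,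
      show Real.sin (γ - θ) ^ 2 * Real.cos θ ^ 2 = (Real.sin (γ - θ) * Real.cos θ) ^ 2 by ring,
      Real.sqrt_sq (by positivity), Real.sqrt_sq (by positivity), ← hγρ, e4]
    ring
  · rw [e1, e2, ← hγρ, e4]; ring
  · have d2 : HasDerivAt (fun x : ℝ => Real.sin (γ - x)) (-Real.cos (γ - θ)) θ := by
      have h := (Real.hasDerivAt_sin (γ - θ)).comp θ
        (((hasDerivAt_id θ).const_sub γ))
      simp only [mul_neg, mul_one] at h
      exact h
    have d1 : HasDerivAt (fun x : ℝ => Real.sin x) (Real.cos θ) θ := Real.hasDerivAt_sin θ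
    have D := ((d1.pow 2).mul_const (Real.sin (2 * γ - 2 * θ))).add
      ((d2.pow 2).mul_const (Real.sin (2 * θ)))
    refine D.congr_deriv ?_
    rw [e1, e2]; ring
  · constructor
    · rw [hs]
      exact div_pos (by rw [e1]; positivity) (by positivity)
    · rw [hs, div_lt_iff₀ (by positivity)]
      nlinarith [keyE, mul_pos hsθ hcθ]
  · rw [hs]
    field_simp
    linarith [keyE, (show Real.sin (2 * (γ - θ)) = Real.sin (2 * γ - 2 * θ) by ring_nf)]
  · have h2s : 2 - s = Real.sin (2 * θ) / (ρ * Real.cos (γ - 2 * θ)) := by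
      rw [hs]; field_simp; linarith [keyE, (show Real.sin (2 * (γ - θ)) = Real.sin (2 * γ - 2 * θ) by ring_nf)]
    have hK : Real.cos (γ - 2 * θ) ^ 2 - Real.sin (2 * γ - 2 * θ) * Real.sin (2 * θ)
        = Real.cos γ ^ 2 := by
      rw [e1, e2, e3, e5]; ring
    have hval : 1 - s * (2 - s) * ρ ^ 2 = (Real.cos γ / Real.cos (γ - 2 * θ)) ^ 2 := by
      rw [h2s, hs]
      field_simp
      have hS : Real.sin (2 * (γ - θ)) = Real.sin (2 * γ - 2 * θ) := by ring_nf
      linear_combination hK - Real.sin (2 * θ) * hS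
    rw [hval, Real.sqrt_sq (by positivity)]
    field_simp
    rw [e3, e5]; ring
end

section
/- Let B : [0,1] → [0,1] be a continuous, strictly decreasing, convex function with B(0) = 1 and B(1) = 0. Let P be the uniform distribution on (0,1) and let Q be the distribution on (0,1) with CDF F(x) = B⁻¹(1 − x). Then the Neyman–Pearson boundary for testing Q versus P is exactly β = B(α): for every t ∈ [0,1], the test set [0,t] achieves α = B⁻¹(1−t) and β = 1 − t (so β = B(α)), and no measurable test set achieves a smaller β at the same α. -/
open MeasureTheory Set
open scoped ENNReal

/-- Increments of a convex function on `[0,1]` are larger further right. -/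
lemma np_incr {φ : ℝ → ℝ} (hconv : ConvexOn ℝ (Set.Icc (0:ℝ) 1) φ)
    {u v h : ℝ} (hu : 0 ≤ u) (huv : u ≤ v) (hh : 0 ≤ h) (hv1 : v + h ≤ 1) :
    φ (u + h) - φ u ≤ φ (v + h) - φ v := by
  rcases hh.eq_or_lt with rfl | hh
  · simp
  rcases huv.eq_or_lt with rfl | huv
  · simp
  have hum : u ∈ Set.Icc (0:ℝ) 1 := ⟨hu, by linarith⟩
  have huhm : u + h ∈ Set.Icc (0:ℝ) 1 := ⟨by linarith, by linarith⟩
  have hvm : v ∈ Set.Icc (0:ℝ) 1 := ⟨by linarith, by linarith⟩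
  have hvhm : v + h ∈ Set.Icc (0:ℝ) 1 := ⟨by linarith, hv1⟩
  have s1 := hconv.secant_mono hum huhm hvhm (by intro hc; nlinarith) (by intro hc; nlinarith)
    (by linarith)
  have s2 := hconv.secant_mono hvhm hum hvm (by intro hc; nlinarith) (by intro hc; nlinarith)
    (by linarith)
  have e0 : u + h - u = h := by ring
  rw [e0] at s1
  have e1 : (φ (v + h) - φ u) / (v + h - u) = (φ u - φ (v + h)) / (u - (v + h)) := by
    rw [← neg_div_neg_eq]; ring_nf
  have e2 : (φ v - φ (v + h)) / (v - (v + h)) = (φ (v + h) - φ v) / h := by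
    rw [← neg_div_neg_eq]; ring_nf
  rw [e1] at s1
  rw [e2] at s2
  have : (φ (u + h) - φ u) / h ≤ (φ (v + h) - φ v) / h := le_trans s1 s2
  have := (div_le_div_iff_of_pos_right hh).mp this
  linarith

/-- Disjointness of open intervals passes to half-open intervals. -/
lemma np_disj_Ioc {a b a' b' : ℝ} (h1 : a < b) (h2 : a' < b')
    (h : Disjoint (Set.Ioo a b) (Set.Ioo a' b')) : Disjoint (Set.Ioc a b) (Set.Ioc a' b') := by
  rw [Set.disjoint_left] at h ⊢
  rintro x ⟨h3, h4⟩ ⟨h5, h6⟩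
  have hm : max a a' < min b b' := by
    simp only [max_lt_iff, lt_min_iff]
    exact ⟨⟨by linarith, by linarith⟩, ⟨by linarith, by linarith⟩⟩
  obtain ⟨y, hy1, hy2⟩ := exists_between hm
  exact h ⟨lt_of_le_of_lt (le_max_left _ _) hy1, lt_of_lt_of_le hy2 (min_le_left _ _)⟩
    ⟨lt_of_le_of_lt (le_max_right _ _) hy1, lt_of_lt_of_le hy2 (min_le_right _ _)⟩

/-- A nonempty bounded open order-connected subset of `(0,1)` is an open interval. -/
lemma np_eq_Ioo (c : Set ℝ) (hne : c.Nonempty) (ho : IsOpen c) (hoc : c.OrdConnected)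
    (hbdd : c ⊆ Set.Ioo 0 1) : c = Set.Ioo (sInf c) (sSup c) := by
  have hbb : BddBelow c := ⟨0, fun x hx => (hbdd hx).1.le⟩
  have hba : BddAbove c := ⟨1, fun x hx => (hbdd hx).2.le⟩
  apply Set.eq_of_subset_of_subset
  · intro x hx
    obtain ⟨ε, hε, hball⟩ := Metric.isOpen_iff.mp ho x hx
    have h1 : x - ε / 2 ∈ c := by
      apply hball
      rw [Metric.mem_ball, Real.dist_eq]
      rw [show x - ε / 2 - x = -(ε / 2) by ring, abs_neg, abs_of_nonneg (by linarith)]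
      linarith
    have h2 : x + ε / 2 ∈ c := by
      apply hball
      rw [Metric.mem_ball, Real.dist_eq]
      rw [show x + ε / 2 - x = ε / 2 by ring, abs_of_nonneg (by linarith)]
      linarith
    exact ⟨lt_of_le_of_lt (csInf_le hbb h1) (by linarith),
      lt_of_lt_of_le (by linarith) (le_csSup hba h2)⟩
  · intro v hv
    obtain ⟨y, hy, hyv⟩ := exists_lt_of_csInf_lt hne hv.1
    obtain ⟨z, hz, hvz⟩ := exists_lt_of_lt_csSup hne hv.2
    exact hoc.out hy hz ⟨hyv.le, hvz.le⟩

/-- Packing inequality for finitely many disjoint intervals, for a function with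
right-increasing increments. -/
lemma np_packing (F : ℝ → ℝ)
    (hF : ∀ u v h : ℝ, 0 ≤ u → u ≤ v → 0 ≤ h → v + h ≤ 1 → F (u + h) - F u ≤ F (v + h) - F v) :
    ∀ (n : ℕ) {ι : Type} [DecidableEq ι] (s : Finset ι) (a b : ι → ℝ) (c : ℝ), s.card ≤ n →
      c ≤ 1 →
      (∀ i ∈ s, 0 ≤ a i ∧ a i < b i ∧ b i ≤ c) →
      ((s : Set ι).Pairwise fun i j => Disjoint (Set.Ioc (a i) (b i)) (Set.Ioc (a j) (b j))) →
      ∑ i ∈ s, (F (b i) - F (a i)) ≤ F c - F (c - ∑ i ∈ s, (b i - a i)) := by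
  intro n
  induction n with
  | zero =>
    intro ι _ s a b c hcard _ _ _
    have hs : s = ∅ := Finset.card_eq_zero.mp (Nat.le_zero.mp hcard)
    subst hs; simp
  | succ n ih =>
    intro ι _ s a b c hcard hc1 hmem hdisj
    rcases s.eq_empty_or_nonempty with rfl | hne
    · simp
    obtain ⟨i₀, hi₀, hmax⟩ := s.exists_max_image b hne
    obtain ⟨ha₀, hab₀, hb₀⟩ := hmem i₀ hi₀
    have hbound : ∀ j ∈ s.erase i₀, b j ≤ a i₀ := by
      intro j hj
      have hjs := Finset.mem_of_mem_erase hj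
      have hjne : j ≠ i₀ := Finset.ne_of_mem_erase hj
      by_contra hlt
      push_neg at hlt
      have hd : Disjoint (Set.Ioc (a j) (b j)) (Set.Ioc (a i₀) (b i₀)) := hdisj hjs hi₀ hjne
      exact Set.disjoint_left.mp hd ⟨(hmem j hjs).2.1, le_refl _⟩ ⟨hlt, hmax j hjs⟩
    have hcard' : (s.erase i₀).card ≤ n := by
      rw [Finset.card_erase_of_mem hi₀]; omega
    have hac' : a i₀ ≤ c - (b i₀ - a i₀) := by linarith
    have ihs := ih (s.erase i₀) a b (c - (b i₀ - a i₀)) hcard' (by linarith)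
      (fun j hj => ⟨(hmem j (Finset.mem_of_mem_erase hj)).1,
        (hmem j (Finset.mem_of_mem_erase hj)).2.1, le_trans (hbound j hj) hac'⟩)
      (hdisj.mono (Finset.coe_subset.mpr (Finset.erase_subset _ _)))
    have hstep : F (b i₀) - F (a i₀) ≤ F c - F (c - (b i₀ - a i₀)) := by
      have h9 := hF (a i₀) (c - (b i₀ - a i₀)) (b i₀ - a i₀) ha₀ hac' (by linarith) (by linarith)
      rw [show a i₀ + (b i₀ - a i₀) = b i₀ by ring,
        show c - (b i₀ - a i₀) + (b i₀ - a i₀) = c by ring] at h9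
      exact h9
    have hsum1 : ∑ i ∈ s, (F (b i) - F (a i))
        = ∑ i ∈ s.erase i₀, (F (b i) - F (a i)) + (F (b i₀) - F (a i₀)) :=
      (Finset.sum_erase_add _ _ hi₀).symm
    have hsum2 : ∑ i ∈ s, (b i - a i)
        = ∑ i ∈ s.erase i₀, (b i - a i) + (b i₀ - a i₀) :=
      (Finset.sum_erase_add _ _ hi₀).symm
    have efin : c - ∑ i ∈ s, (b i - a i)
        = c - (b i₀ - a i₀) - ∑ i ∈ s.erase i₀, (b i - a i) := by rw [hsum2]; ring
    rw [hsum1, efin]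
    linarith
/-- Exact realization of a Neyman–Pearson boundary: for a continuous strictly decreasing convex
`B : [0,1] → [0,1]` with `B 0 = 1`, `B 1 = 0`, the pair `P = U(0,1)` (Lebesgue) and `Q` with CDF
`F(x) = B⁻¹(1 − x)` has Neyman–Pearson boundary exactly `β = B(α)`: the test set `[0,t]` achieves
`α = B⁻¹(1−t)`, `β = 1 − t` (so `β = B(α)`), and no measurable test set with the same `α`
achieves a smaller `β`. -/
theorem stmt_18 (B Binv : ℝ → ℝ)
    (hBcont : ContinuousOn B (Set.Icc (0:ℝ) 1))
    (hBanti : StrictAntiOn B (Set.Icc (0:ℝ) 1))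
    (hBconv : ConvexOn ℝ (Set.Icc (0:ℝ) 1) B)
    (hB0 : B 0 = 1) (hB1 : B 1 = 0)
    (hBmem : ∀ x ∈ Set.Icc (0:ℝ) 1, B x ∈ Set.Icc (0:ℝ) 1)
    (hBinv₁ : ∀ x ∈ Set.Icc (0:ℝ) 1, Binv (B x) = x)
    (hBinv₂ : ∀ y ∈ Set.Icc (0:ℝ) 1, B (Binv y) = y)
    (Q : Measure ℝ) [IsProbabilityMeasure Q]
    (hQsupp : Q (Set.Ioo (0:ℝ) 1) = 1)
    -- the CDF of Q is F(x) = B⁻¹(1 − x)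
    (hQcdf : ∀ x ∈ Set.Icc (0:ℝ) 1, Q (Set.Iic x) = ENNReal.ofReal (Binv (1 - x))) :
    ∀ t ∈ Set.Icc (0:ℝ) 1,
      -- the test set [0, t] achieves α = B⁻¹(1 − t) and β = 1 − t, so β = B(α)
      ((Q (Set.Iic t)).toReal = Binv (1 - t) ∧
        B ((Q (Set.Iic t)).toReal) = 1 - t) ∧
      -- optimality: any measurable test set with the same α has β ≥ 1 − t
      ∀ E : Set ℝ, MeasurableSet E → Q E = Q (Set.Iic t) →
        1 - (volume (E ∩ Set.Ioo (0:ℝ) 1)).toReal ≥ 1 - t := by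
  have hmem01 : (0:ℝ) ∈ Set.Icc (0:ℝ) 1 := ⟨le_refl _, zero_le_one⟩
  have hmem11 : (1:ℝ) ∈ Set.Icc (0:ℝ) 1 := ⟨zero_le_one, le_refl _⟩
  have hBinv0 : Binv 0 = 1 := by rw [← hB1]; exact hBinv₁ 1 hmem11
  have hsurj : ∀ y ∈ Set.Icc (0:ℝ) 1, ∃ x ∈ Set.Icc (0:ℝ) 1, B x = y := by
    intro y hy
    have h := intermediate_value_Icc' zero_le_one hBcont
    rw [hB0, hB1] at h
    obtain ⟨x, hx1, hx2⟩ := h hy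
    exact ⟨x, hx1, hx2⟩
  have hBinvmem : ∀ y ∈ Set.Icc (0:ℝ) 1, Binv y ∈ Set.Icc (0:ℝ) 1 := by
    intro y hy; obtain ⟨x, hx, rfl⟩ := hsurj y hy; rw [hBinv₁ x hx]; exact hx
  have hBinvanti : ∀ y ∈ Set.Icc (0:ℝ) 1, ∀ z ∈ Set.Icc (0:ℝ) 1, y ≤ z → Binv z ≤ Binv y := by
    intro y hy z hz hyz
    obtain ⟨xy, hxy, hy'⟩ := hsurj y hy
    obtain ⟨xz, hxz, hz'⟩ := hsurj z hz
    rw [← hy', ← hz', hBinv₁ xy hxy, hBinv₁ xz hxz]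
    by_contra hcon
    push_neg at hcon
    have h2 := hBanti hxy hxz hcon
    rw [hy', hz'] at h2
    linarith
  have hBinvstrict : ∀ y ∈ Set.Icc (0:ℝ) 1, ∀ z ∈ Set.Icc (0:ℝ) 1, y < z → Binv z < Binv y := by
    intro y hy z hz hyz
    rcases lt_or_eq_of_le (hBinvanti y hy z hz hyz.le) with h | h
    · exact h
    · exfalso
      have h3 : B (Binv z) = B (Binv y) := by rw [h]
      rw [hBinv₂ z hz, hBinv₂ y hy] at h3
      linarith
  have hBinvconv : ConvexOn ℝ (Set.Icc (0:ℝ) 1) Binv := by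
    refine ⟨convex_Icc _ _, ?_⟩
    intro y hy z hz p q hp hq hpq
    obtain ⟨xy, hxy, rfl⟩ := hsurj y hy
    obtain ⟨xz, hxz, rfl⟩ := hsurj z hz
    rw [hBinv₁ xy hxy, hBinv₁ xz hxz]
    have hmix : p • xy + q • xz ∈ Set.Icc (0:ℝ) 1 := (convex_Icc (0:ℝ) 1) hxy hxz hp hq hpq
    have h1 : B (p • xy + q • xz) ≤ p • B xy + q • B xz := hBconv.2 hxy hxz hp hq hpq
    have h2 : p • B xy + q • B xz ∈ Set.Icc (0:ℝ) 1 := by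
      obtain ⟨hy0, hy1⟩ := hBmem xy hxy
      obtain ⟨hz0, hz1⟩ := hBmem xz hxz
      simp only [smul_eq_mul]
      constructor
      · exact add_nonneg (mul_nonneg hp hy0) (mul_nonneg hq hz0)
      · have ha := mul_le_mul_of_nonneg_left hy1 hp
        have hb := mul_le_mul_of_nonneg_left hz1 hq
        linarith
    have h4 := hBinvanti _ (hBmem _ hmix) _ h2 h1
    rw [hBinv₁ _ hmix] at h4
    exact h4
  have hFinc : ∀ u v h : ℝ, 0 ≤ u → u ≤ v → 0 ≤ h → v + h ≤ 1 →
      Binv (1 - (u + h)) - Binv (1 - u) ≤ Binv (1 - (v + h)) - Binv (1 - v) := by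
    intro u v h h0u huv h0h hv1
    have h5 := np_incr hBinvconv (u := 1 - v - h) (v := 1 - u - h) (h := h)
      (by linarith) (by linarith) h0h (by linarith)
    rw [show 1 - v - h + h = 1 - v by ring, show 1 - u - h + h = 1 - u by ring] at h5
    rw [show 1 - (u + h) = 1 - u - h by ring, show 1 - (v + h) = 1 - v - h by ring]
    linarith
  have hImeas : MeasurableSet (Set.Ioo (0:ℝ) 1) := measurableSet_Ioo
  have volI : volume (Set.Ioo (0:ℝ) 1) = 1 := by
    rw [Real.volume_Ioo]; norm_num
  -- bound for open subsets of (0,1)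
  have openbound : ∀ U : Set ℝ, IsOpen U → U ⊆ Set.Ioo (0:ℝ) 1 →
      Q U ≤ ENNReal.ofReal (1 - Binv ((volume U).toReal)) := by
    intro U hUopen hUI
    have hvU1 : volume U ≤ 1 := by rw [← volI]; exact measure_mono hUI
    have hvUfin : volume U ≠ ⊤ := ne_top_of_le_ne_top ENNReal.one_ne_top hvU1
    have hvU01 : (volume U).toReal ∈ Set.Icc (0:ℝ) 1 :=
      ⟨ENNReal.toReal_nonneg, by simpa using ENNReal.toReal_mono ENNReal.one_ne_top hvU1⟩
    set C : Set (Set ℝ) := (fun x => connectedComponentIn U x) '' U with hCdef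
    have hCsub : ∀ c ∈ C, c ⊆ U := by rintro c ⟨x, hx, rfl⟩; exact connectedComponentIn_subset U x
    have hCopen : ∀ c ∈ C, IsOpen c := by rintro c ⟨x, hx, rfl⟩; exact hUopen.connectedComponentIn
    have hCne : ∀ c ∈ C, Set.Nonempty c := by
      rintro c ⟨x, hx, rfl⟩; exact ⟨x, mem_connectedComponentIn hx⟩
    have hCdisj : C.Pairwise Disjoint := by
      rintro c ⟨x, hx, rfl⟩ d ⟨y, hy, rfl⟩ hne
      by_contra hcon
      rw [Set.not_disjoint_iff] at hcon
      obtain ⟨z, hz1, hz2⟩ := hcon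
      exact hne ((connectedComponentIn_eq hz1).trans (connectedComponentIn_eq hz2).symm)
    have hCIoo : ∀ c ∈ C, c = Set.Ioo (sInf c) (sSup c) ∧ 0 ≤ sInf c ∧ sInf c < sSup c ∧
        sSup c ≤ 1 := by
      intro c hc
      have hoc : c.OrdConnected := by
        obtain ⟨x, hx, rfl⟩ := hc
        exact isPreconnected_connectedComponentIn.ordConnected
      have hsub : c ⊆ Set.Ioo 0 1 := (hCsub c hc).trans hUI
      have h1 := np_eq_Ioo c (hCne c hc) (hCopen c hc) hoc hsub
      have h2 : 0 ≤ sInf c := le_csInf (hCne c hc) (fun x hx => (hsub hx).1.le)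
      have h3 : sSup c ≤ 1 := csSup_le (hCne c hc) (fun x hx => (hsub hx).2.le)
      have h4 : sInf c < sSup c := by
        obtain ⟨x, hx⟩ := hCne c hc
        have h5 := hx; rw [h1] at h5
        exact lt_trans h5.1 h5.2
      exact ⟨h1, h2, h4, h3⟩
    have hCcount : C.Countable := by
      have hCq : ∀ c : C, ∃ q : ℚ, (q : ℝ) ∈ (c : Set ℝ) := by
        intro c
        obtain ⟨h1, _, hlt, _⟩ := hCIoo c c.2
        obtain ⟨q, hq1, hq2⟩ := exists_rat_btwn hlt
        exact ⟨q, by rw [h1]; exact ⟨hq1, hq2⟩⟩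
      choose f hf using hCq
      have hinj : Function.Injective f := by
        intro c d hcd
        by_contra hne
        have hnecoe : (c : Set ℝ) ≠ (d : Set ℝ) := fun h => hne (Subtype.ext h)
        have hdisj := hCdisj c.2 d.2 hnecoe
        have h2 : (f c : ℝ) ∈ (d : Set ℝ) := by rw [hcd]; exact hf d
        exact (Set.disjoint_left.mp hdisj (hf c)) h2
      exact Set.countable_iff_exists_injective.mpr
        ⟨fun c => Encodable.encode (f c), fun c d h => hinj (Encodable.encode_injective h)⟩
    have hCmeas : ∀ c ∈ C, MeasurableSet c := fun c hc => (hCopen c hc).measurableSet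
    have hUC : ⋃₀ C = U := by
      apply Set.Subset.antisymm (Set.sUnion_subset hCsub)
      intro x hx
      exact ⟨connectedComponentIn U x, ⟨x, hx, rfl⟩, mem_connectedComponentIn hx⟩
    have hQU : Q U = ∑' c : C, Q (c : Set ℝ) := by
      rw [← hUC]; exact measure_sUnion hCcount hCdisj hCmeas
    rw [hQU, ENNReal.tsum_eq_iSup_sum]
    refine iSup_le fun S => ?_
    classical
    set a : C → ℝ := fun c => sInf (c : Set ℝ) with hadef
    set b : C → ℝ := fun c => sSup (c : Set ℝ) with hbdef
    have hprop : ∀ c : C, (c : Set ℝ) = Set.Ioo (a c) (b c) ∧ 0 ≤ a c ∧ a c < b c ∧ b c ≤ 1 :=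
      fun c => hCIoo c c.2
    have hdisjIoc : ((S : Set C)).Pairwise
        fun i j => Disjoint (Set.Ioc (a i) (b i)) (Set.Ioc (a j) (b j)) := by
      intro i _ j _ hne
      have hdIoo : Disjoint (Set.Ioo (a i) (b i)) (Set.Ioo (a j) (b j)) := by
        rw [← (hprop i).1, ← (hprop j).1]
        exact hCdisj i.2 j.2 (fun h => hne (Subtype.ext h))
      exact np_disj_Ioc (hprop i).2.2.1 (hprop j).2.2.1 hdIoo
    have hlen : ∑ c ∈ S, (b c - a c) ≤ (volume U).toReal := by
      have hvol : ∀ c : C, volume (c : Set ℝ) = ENNReal.ofReal (b c - a c) := by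
        intro c
        rw [(hprop c).1]
        exact Real.volume_Ioo
      have hdisjS : ((S : Set C)).PairwiseDisjoint (fun c : C => (c : Set ℝ)) := by
        intro i _ j _ hne
        exact hCdisj i.2 j.2 (fun h => hne (Subtype.ext h))
      have h7 : volume (⋃ c ∈ S, (c : Set ℝ)) = ∑ c ∈ S, volume (c : Set ℝ) :=
        measure_biUnion_finset hdisjS (fun c _ => hCmeas c c.2)
      have h8 : volume (⋃ c ∈ S, (c : Set ℝ)) ≤ volume U :=
        measure_mono (Set.iUnion₂_subset fun c _ => hCsub c c.2)
      have h10 : ENNReal.ofReal (∑ c ∈ S, (b c - a c)) ≤ volume U := by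
        calc ENNReal.ofReal (∑ c ∈ S, (b c - a c))
            = ∑ c ∈ S, ENNReal.ofReal (b c - a c) :=
              ENNReal.ofReal_sum_of_nonneg (fun c _ => by linarith [(hprop c).2.2.1])
          _ = ∑ c ∈ S, volume (c : Set ℝ) := Finset.sum_congr rfl (fun c _ => (hvol c).symm)
          _ = volume (⋃ c ∈ S, (c : Set ℝ)) := h7.symm
          _ ≤ volume U := h8
      have h11 := ENNReal.toReal_mono hvUfin h10
      rwa [ENNReal.toReal_ofReal
        (Finset.sum_nonneg (fun c _ => by linarith [(hprop c).2.2.1]))] at h11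
    have hterm : ∀ c ∈ S, Q ((c : C) : Set ℝ) ≤
        ENNReal.ofReal (Binv (1 - b c) - Binv (1 - a c)) := by
      intro c _
      obtain ⟨hIoo, h0a, hab, hb1⟩ := hprop c
      have ham : a c ∈ Set.Icc (0:ℝ) 1 := ⟨h0a, by linarith⟩
      have hbm : b c ∈ Set.Icc (0:ℝ) 1 := ⟨by linarith, hb1⟩
      have h1am : 1 - a c ∈ Set.Icc (0:ℝ) 1 := ⟨by linarith [ham.2], by linarith [ham.1]⟩
      have hQIoc : Q (Set.Ioc (a c) (b c)) =
          ENNReal.ofReal (Binv (1 - b c)) - ENNReal.ofReal (Binv (1 - a c)) := by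
        rw [← Set.Iic_sdiff_Iic,
          measure_diff (Set.Iic_subset_Iic.mpr hab.le) measurableSet_Iic.nullMeasurableSet
            (measure_ne_top Q _),
          hQcdf (b c) hbm, hQcdf (a c) ham]
      calc Q ((c : C) : Set ℝ) ≤ Q (Set.Ioc (a c) (b c)) := by
            rw [hIoo]; exact measure_mono Set.Ioo_subset_Ioc_self
        _ = ENNReal.ofReal (Binv (1 - b c)) - ENNReal.ofReal (Binv (1 - a c)) := hQIoc
        _ = ENNReal.ofReal (Binv (1 - b c) - Binv (1 - a c)) :=
            (ENNReal.ofReal_sub _ ((hBinvmem _ h1am).1)).symm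
    have htermnonneg : ∀ c : C, c ∈ S → 0 ≤ Binv (1 - b c) - Binv (1 - a c) := by
      intro c _
      obtain ⟨_, h0a, hab, hb1⟩ := hprop c
      have h12 := hBinvanti (1 - b c) ⟨by linarith, by linarith⟩ (1 - a c)
        ⟨by linarith, by linarith⟩ (by linarith)
      linarith
    have hsum : ∑ c ∈ S, (Binv (1 - b c) - Binv (1 - a c)) ≤ 1 - Binv ((volume U).toReal) := by
      have hFbounds : ∀ c ∈ S, 0 ≤ a c ∧ a c < b c ∧ b c ≤ (1:ℝ) :=
        fun c _ => ⟨(hprop c).2.1, (hprop c).2.2.1, (hprop c).2.2.2⟩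
      have hpack := np_packing (fun z => Binv (1 - z)) hFinc S.card S a b 1 le_rfl le_rfl
        hFbounds hdisjIoc
      rw [show (1:ℝ) - 1 = 0 by ring, hBinv0] at hpack
      have hL0 : 0 ≤ ∑ c ∈ S, (b c - a c) :=
        Finset.sum_nonneg (fun c _ => by linarith [(hprop c).2.2.1])
      rw [show (1:ℝ) - (1 - ∑ c ∈ S, (b c - a c)) = ∑ c ∈ S, (b c - a c) by ring] at hpack
      have h12 := hBinvanti _ ⟨hL0, le_trans hlen hvU01.2⟩ _ hvU01 hlen
      linarith
    refine le_trans (Finset.sum_le_sum hterm) ?_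
    rw [← ENNReal.ofReal_sum_of_nonneg htermnonneg]
    exact ENNReal.ofReal_le_ofReal hsum
  -- the general bound
  have key : ∀ V : Set ℝ, MeasurableSet V → V ⊆ Set.Ioo (0:ℝ) 1 →
      Q V ≤ ENNReal.ofReal (1 - Binv ((volume V).toReal)) := by
    intro V hV hVI
    have hvV1 : volume V ≤ 1 := by rw [← volI]; exact measure_mono hVI
    have hvVfin : volume V ≠ ⊤ := ne_top_of_le_ne_top ENNReal.one_ne_top hvV1
    have hw01 : (volume V).toReal ∈ Set.Icc (0:ℝ) 1 :=
      ⟨ENNReal.toReal_nonneg, by simpa using ENNReal.toReal_mono ENNReal.one_ne_top hvV1⟩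
    refine ENNReal.le_of_forall_pos_le_add fun ε hε _ => ?_
    have hεR : (0:ℝ) < (ε : ℝ) := hε
    set w := (volume V).toReal with hwdef
    have hδex : ∃ δ : ℝ, 0 < δ ∧ ∀ w' ∈ Set.Icc (0:ℝ) 1, w' ≤ w + δ →
        Binv w - (ε : ℝ) ≤ Binv w' := by
      by_cases hcase : Binv w - (ε : ℝ) ≤ 0
      · exact ⟨1, one_pos, fun w' hw' _ => le_trans hcase (hBinvmem w' hw').1⟩
      · push_neg at hcase
        have hu := hBinvmem w hw01
        have huε : Binv w - (ε : ℝ) ∈ Set.Icc (0:ℝ) 1 := ⟨hcase.le, by linarith [hu.2]⟩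
        have hBu : B (Binv w) = w := hBinv₂ w hw01
        have hBlt : w < B (Binv w - (ε : ℝ)) := by
          have h6 := hBanti huε hu (by linarith)
          rwa [hBu] at h6
        refine ⟨B (Binv w - (ε : ℝ)) - w, by linarith, fun w' hw' hle => ?_⟩
        have h5 := hBinvanti w' hw' (B (Binv w - (ε : ℝ))) (hBmem _ huε) (by linarith)
        rwa [hBinv₁ _ huε] at h5
    obtain ⟨δ, hδpos, hδprop⟩ := hδex
    have hlt : volume V < volume V + ENNReal.ofReal δ :=
      ENNReal.lt_add_right hvVfin (ENNReal.ofReal_pos.mpr hδpos).ne'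
    obtain ⟨U₀, hVU₀, hU₀open, hU₀lt⟩ := Set.exists_isOpen_lt_of_lt V _ hlt
    have hUopen : IsOpen (U₀ ∩ Set.Ioo (0:ℝ) 1) := hU₀open.inter isOpen_Ioo
    have hVU : V ⊆ U₀ ∩ Set.Ioo (0:ℝ) 1 := Set.subset_inter hVU₀ hVI
    have hUI : U₀ ∩ Set.Ioo (0:ℝ) 1 ⊆ Set.Ioo (0:ℝ) 1 := Set.inter_subset_right
    have hvolU : volume (U₀ ∩ Set.Ioo (0:ℝ) 1) ≤ volume V + ENNReal.ofReal δ :=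
      le_trans (measure_mono Set.inter_subset_left) hU₀lt.le
    have hvU1 : volume (U₀ ∩ Set.Ioo (0:ℝ) 1) ≤ 1 := by rw [← volI]; exact measure_mono hUI
    have hvU01 : (volume (U₀ ∩ Set.Ioo (0:ℝ) 1)).toReal ∈ Set.Icc (0:ℝ) 1 :=
      ⟨ENNReal.toReal_nonneg, by simpa using ENNReal.toReal_mono ENNReal.one_ne_top hvU1⟩
    have hvUw : (volume (U₀ ∩ Set.Ioo (0:ℝ) 1)).toReal ≤ w + δ := by
      have h6 := ENNReal.toReal_mono
        (ENNReal.add_ne_top.mpr ⟨hvVfin, ENNReal.ofReal_ne_top⟩) hvolU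
      rwa [ENNReal.toReal_add hvVfin ENNReal.ofReal_ne_top,
        ENNReal.toReal_ofReal hδpos.le] at h6
    have h7 := hδprop _ hvU01 hvUw
    calc Q V ≤ Q (U₀ ∩ Set.Ioo (0:ℝ) 1) := measure_mono hVU
      _ ≤ ENNReal.ofReal (1 - Binv ((volume (U₀ ∩ Set.Ioo (0:ℝ) 1)).toReal)) :=
          openbound _ hUopen hUI
      _ ≤ ENNReal.ofReal ((1 - Binv w) + (ε : ℝ)) := ENNReal.ofReal_le_ofReal (by linarith)
      _ ≤ ENNReal.ofReal (1 - Binv w) + ENNReal.ofReal (ε : ℝ) := ENNReal.ofReal_add_le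
      _ = ENNReal.ofReal (1 - Binv w) + ε := by rw [ENNReal.ofReal_coe_nnreal]
  -- main statement
  intro t ht
  have h1t : (1:ℝ) - t ∈ Set.Icc (0:ℝ) 1 := ⟨by linarith [ht.2], by linarith [ht.1]⟩
  have hmem1t := hBinvmem _ h1t
  have htoReal : (Q (Set.Iic t)).toReal = Binv (1 - t) := by
    rw [hQcdf t ht, ENNReal.toReal_ofReal hmem1t.1]
  refine ⟨⟨htoReal, by rw [htoReal]; exact hBinv₂ _ h1t⟩, ?_⟩
  intro E hE hQE
  set s := (volume (E ∩ Set.Ioo (0:ℝ) 1)).toReal with hsdef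
  have hsvol1 : volume (E ∩ Set.Ioo (0:ℝ) 1) ≤ 1 := by
    rw [← volI]; exact measure_mono Set.inter_subset_right
  have hsfin : volume (E ∩ Set.Ioo (0:ℝ) 1) ≠ ⊤ := ne_top_of_le_ne_top ENNReal.one_ne_top hsvol1
  have hs01 : s ∈ Set.Icc (0:ℝ) 1 :=
    ⟨ENNReal.toReal_nonneg, by simpa using ENNReal.toReal_mono ENNReal.one_ne_top hsvol1⟩
  have hst : s ≤ t := by
    have hWmeas : MeasurableSet (Set.Ioo (0:ℝ) 1 \ E) := hImeas.diff hE
    have hWI : Set.Ioo (0:ℝ) 1 \ E ⊆ Set.Ioo (0:ℝ) 1 := Set.diff_subset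
    have hvolW : volume (Set.Ioo (0:ℝ) 1 \ E) = 1 - volume (E ∩ Set.Ioo (0:ℝ) 1) := by
      have h8 := measure_inter_add_diff (μ := volume) (Set.Ioo (0:ℝ) 1) hE
      rw [volI, Set.inter_comm] at h8
      exact ENNReal.eq_sub_of_add_eq hsfin (by rw [add_comm]; exact h8)
    have hvolWtoReal : (volume (Set.Ioo (0:ℝ) 1 \ E)).toReal = 1 - s := by
      rw [hvolW, ENNReal.toReal_sub_of_le hsvol1 ENNReal.one_ne_top, ENNReal.toReal_one]
    have hQIc : Q (Set.Ioo (0:ℝ) 1)ᶜ = 0 := by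
      rw [measure_compl hImeas (measure_ne_top Q _), hQsupp, measure_univ, tsub_self]
    have hQEI : Q (E ∩ Set.Ioo (0:ℝ) 1) = Q E := by
      have h9 := measure_inter_add_diff (μ := Q) E hImeas
      have h10 : Q (E \ Set.Ioo (0:ℝ) 1) = 0 :=
        le_antisymm (le_trans (measure_mono (fun x hx => hx.2)) hQIc.le) zero_le
      rw [h10, add_zero] at h9
      exact h9
    have hQW : Q (Set.Ioo (0:ℝ) 1 \ E) = 1 - ENNReal.ofReal (Binv (1 - t)) := by
      have h11 := measure_inter_add_diff (μ := Q) (Set.Ioo (0:ℝ) 1) hE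
      rw [hQsupp, Set.inter_comm, hQEI, hQE, hQcdf t ht] at h11
      exact ENNReal.eq_sub_of_add_eq ENNReal.ofReal_ne_top (by rw [add_comm]; exact h11)
    have hkey := key _ hWmeas hWI
    rw [hvolWtoReal, hQW] at hkey
    have h13 : (1:ℝ≥0∞) - ENNReal.ofReal (Binv (1 - t)) = ENNReal.ofReal (1 - Binv (1 - t)) := by
      rw [ENNReal.ofReal_sub _ hmem1t.1, ENNReal.ofReal_one]
    rw [h13] at hkey
    have h1smem : (1:ℝ) - s ∈ Set.Icc (0:ℝ) 1 := ⟨by linarith [hs01.2], by linarith [hs01.1]⟩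
    have h14 : (1:ℝ) - Binv (1 - t) ≤ 1 - Binv (1 - s) :=
      (ENNReal.ofReal_le_ofReal_iff (by linarith [(hBinvmem _ h1smem).2])).mp hkey
    by_contra hcon
    push_neg at hcon
    have h15 := hBinvstrict (1 - s) h1smem (1 - t) h1t (by linarith)
    linarith
  linarith
end

section
/- Let (α₀,β₀) = (0,1) and let (αᵢ,βᵢ), i = 1,…,n, be points with αᵢ strictly increasing, βᵢ strictly decreasing, βₙ = 0, αₙ ≤ 1, forming a convex piecewise linear curve with negative slopes −kᵢ, where kᵢ = −(βᵢ − βᵢ₋₁)/(αᵢ − αᵢ₋₁) is strictly decreasing in i. Define categorical distributions P and Q on {1,…,n+1} by qᵢ = αᵢ − αᵢ₋₁ and pᵢ = kᵢ·qᵢ for i ≤ n, with q_{n+1} = 1 − αₙ and p_{n+1} = 0. Then pᵢ/qᵢ = kᵢ, and the Neyman–Pearson boundary of (P, Q) is exactly this piecewise linear curve: taking α to be the Q-mass of the rejection region and β to be 1 minus its P-mass, the rejection region {1,…,j} achieves (αⱼ, βⱼ) = (∑_{i≤j} qᵢ, 1 − ∑_{i≤j} pᵢ). -/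
open Finset

/-- Realization of a convex piecewise linear Neyman–Pearson boundary by a pair of categorical
distributions on `{1, …, n+1}` with density ratios `pᵢ/qᵢ = kᵢ`: the curve's change points are
achieved by the sets `{1, …, j}`, and every test set lies on or above each supporting line of
the curve. -/
theorem stmt_19 (n : ℕ) (hn : 1 ≤ n) (α β k pp qq : ℕ → ℝ)
    (hα0 : α 0 = 0) (hβ0 : β 0 = 1) (hβn : β n = 0) (hαn : α n ≤ 1)
    (hαmono : ∀ i < n, α i < α (i + 1))
    (hβanti : ∀ i < n, β (i + 1) < β i)
    (hk : ∀ i, 1 ≤ i → i ≤ n → k i = -((β i - β (i - 1)) / (α i - α (i - 1))))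
    (hkanti : ∀ i, 1 ≤ i → i < n → k (i + 1) < k i)
    (hqq : ∀ i, 1 ≤ i → i ≤ n → qq i = α i - α (i - 1))
    (hpp : ∀ i, 1 ≤ i → i ≤ n → pp i = k i * qq i)
    (hqlast : qq (n + 1) = 1 - α n) (hplast : pp (n + 1) = 0) :
    -- density ratios
    (∀ i, 1 ≤ i → i ≤ n → pp i / qq i = k i) ∧
    -- P and Q are probability distributions
    (∀ i, 1 ≤ i → i ≤ n + 1 → 0 ≤ pp i ∧ 0 ≤ qq i) ∧
    (∑ i ∈ Finset.Icc 1 (n + 1), pp i = 1 ∧ ∑ i ∈ Finset.Icc 1 (n + 1), qq i = 1) ∧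
    -- the set of the j items of largest likelihood ratio achieves the change point (αⱼ, βⱼ)
    (∀ j ≤ n, α j = ∑ i ∈ Finset.Icc 1 j, qq i ∧ β j = 1 - ∑ i ∈ Finset.Icc 1 j, pp i) ∧
    -- every test set lies on or above each supporting line of the piecewise linear curve
    ∀ S ⊆ Finset.Icc 1 (n + 1), ∀ j, 1 ≤ j → j ≤ n →
      (1 - ∑ i ∈ S, pp i) + k j * ∑ i ∈ S, qq i ≥ β j + k j * α j := by

  -- positivity of denominators / qq
  have hqpos : ∀ i, 1 ≤ i → i ≤ n → 0 < qq i := by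
    intro i h1 h2
    have := hαmono (i - 1) (by omega)
    rw [Nat.sub_add_cancel h1] at this
    rw [hqq i h1 h2]; linarith
  -- pp telescopes beta
  have hppβ : ∀ i, 1 ≤ i → i ≤ n → pp i = β (i - 1) - β i := by
    intro i h1 h2
    have hd : α i - α (i - 1) ≠ 0 := by
      have := hαmono (i - 1) (by omega)
      rw [Nat.sub_add_cancel h1] at this
      linarith
    rw [hpp i h1 h2, hqq i h1 h2, hk i h1 h2]
    field_simp
    ring
  -- k is antitone on [1,n]
  have kmono : ∀ j, j ≤ n → ∀ i, 1 ≤ i → i ≤ j → k j ≤ k i := by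
    intro j
    induction j with
    | zero => intro _ i h1 h2; omega
    | succ m ih =>
      intro hj i h1 hij
      rcases eq_or_lt_of_le hij with h | h
      · rw [h]
      · have h2 : i ≤ m := by omega
        have hm1 : 1 ≤ m := le_trans h1 h2
        have h3 := ih (by omega) i h1 h2
        have h4 := hkanti m hm1 (by omega)
        linarith
  have kn_pos : 0 < k n := by
    have hd := hqpos n hn le_rfl
    rw [hqq n hn le_rfl] at hd
    have hb : 0 < β (n - 1) := by
      have h := hβanti (n - 1) (by omega)
      rw [Nat.sub_add_cancel hn] at h
      linarith [hβn ▸ h]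
    rw [hk n hn le_rfl, hβn]
    have heq : -((0 - β (n - 1)) / (α n - α (n - 1))) = β (n - 1) / (α n - α (n - 1)) := by
      ring
    rw [heq]
    exact div_pos hb hd
  have kpos : ∀ i, 1 ≤ i → i ≤ n → 0 < k i := fun i h1 h2 =>
    lt_of_lt_of_le kn_pos (kmono n le_rfl i h1 h2)
  -- telescoping sums
  have hsumq : ∀ j, j ≤ n → ∑ i ∈ Finset.Icc 1 j, qq i = α j := by
    intro j
    induction j with
    | zero => intro _; simp [hα0]
    | succ m ih =>
      intro hj
      rw [Finset.sum_Icc_succ_top (by omega : 1 ≤ m + 1), ih (by omega),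
        hqq (m + 1) (by omega) hj]
      simp
  have hsump : ∀ j, j ≤ n → ∑ i ∈ Finset.Icc 1 j, pp i = 1 - β j := by
    intro j
    induction j with
    | zero => intro _; simp [hβ0]
    | succ m ih =>
      intro hj
      rw [Finset.sum_Icc_succ_top (by omega : 1 ≤ m + 1), ih (by omega),
        hppβ (m + 1) (by omega) hj]
      simp only [Nat.add_sub_cancel]
      ring
  have htotq : ∑ i ∈ Finset.Icc 1 (n + 1), qq i = 1 := by
    rw [Finset.sum_Icc_succ_top (by omega : 1 ≤ n + 1), hsumq n le_rfl, hqlast]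
    ring
  have htotp : ∑ i ∈ Finset.Icc 1 (n + 1), pp i = 1 := by
    rw [Finset.sum_Icc_succ_top (by omega : 1 ≤ n + 1), hsump n le_rfl, hplast, hβn]
    ring
  refine ⟨?_, ?_, ⟨htotp, htotq⟩, ?_, ?_⟩
  · intro i h1 h2
    rw [hpp i h1 h2]
    field_simp [(hqpos i h1 h2).ne']
  · intro i h1 h2
    rcases eq_or_lt_of_le h2 with h | h
    · rw [h, hplast, hqlast]
      constructor
      · exact le_refl 0
      · linarith
    · have h2' : i ≤ n := by omega
      refine ⟨?_, (hqpos i h1 h2').le⟩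
      rw [hpp i h1 h2']
      exact mul_nonneg (kpos i h1 h2').le (hqpos i h1 h2').le
  · intro j hj
    exact ⟨(hsumq j hj).symm, by rw [hsump j hj]; ring⟩
  · intro S hS j hj1 hjn
    have hkj := kpos j hj1 hjn
    -- rewrite both sides via the common expression
    have split : ∀ T : Finset ℕ, T ⊆ Finset.Icc 1 (n + 1) →
        ∑ i ∈ Finset.Icc 1 (n + 1), (if i ∈ T then k j * qq i else pp i)
          = (1 - ∑ i ∈ T, pp i) + k j * ∑ i ∈ T, qq i := by
      intro T hT
      have h1 : ∀ i ∈ Finset.Icc 1 (n + 1),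
          (if i ∈ T then k j * qq i else pp i)
            = pp i + (if i ∈ T then k j * qq i - pp i else 0) := by
        intro i _
        by_cases h : i ∈ T <;> simp [h]
      rw [Finset.sum_congr rfl h1, Finset.sum_add_distrib, htotp,
        ← Finset.sum_filter]
      have : Finset.filter (· ∈ T) (Finset.Icc 1 (n + 1)) = T := by
        ext x
        simp only [Finset.mem_filter]
        constructor
        · exact fun h => h.2
        · exact fun h => ⟨hT h, h⟩
      rw [this, Finset.sum_sub_distrib, Finset.mul_sum]
      ring
    have hIj : Finset.Icc 1 j ⊆ Finset.Icc 1 (n + 1) := by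
      intro x hx
      simp only [Finset.mem_Icc] at *
      omega
    have hrhs : β j + k j * α j
        = (1 - ∑ i ∈ Finset.Icc 1 j, pp i) + k j * ∑ i ∈ Finset.Icc 1 j, qq i := by
      rw [hsump j hjn, hsumq j hjn]; ring
    rw [hrhs, ← split S hS, ← split (Finset.Icc 1 j) hIj, ge_iff_le]
    apply Finset.sum_le_sum
    intro i hi
    simp only [Finset.mem_Icc] at hi
    have hqnn : 0 ≤ qq i := by
      rcases eq_or_lt_of_le hi.2 with h | h
      · rw [h, hqlast]; linarith
      · exact (hqpos i hi.1 (by omega)).le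
    by_cases hiS : i ∈ S <;> by_cases hij : i ≤ j
    · simp [hiS, Finset.mem_Icc, hi.1, hij]
    · -- i ∈ S, i > j : target pp i ≤ k j * qq i
      have hle : pp i ≤ k j * qq i := by
        rcases eq_or_lt_of_le hi.2 with h | h
        · rw [h, hplast, hqlast]
          exact mul_nonneg hkj.le (by linarith)
        · have hin : i ≤ n := by omega
          rw [hpp i hi.1 hin]
          exact mul_le_mul_of_nonneg_right (kmono i hin j hj1 (by omega)) hqnn
      simp only [hiS, if_true, Finset.mem_Icc]
      rw [if_neg (by omega)]
      exact hle
    · -- i ∉ S, i ≤ j : target k j qq i ≤ pp i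
      have hin : i ≤ n := by omega
      have hle : k j * qq i ≤ pp i := by
        rw [hpp i hi.1 hin]
        exact mul_le_mul_of_nonneg_right (kmono j hjn i hi.1 hij) hqnn
      simp only [hiS, if_false, Finset.mem_Icc]
      rw [if_pos ⟨hi.1, hij⟩]
      exact hle
    · simp only [hiS, if_false, Finset.mem_Icc]
      rw [if_neg (by omega)]
end
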